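/- arXiv:2202.12127 — 3 statements merged into one kernel-verified Lean document; each statement's English description precedes it below -/
import Mathlib

section
/- Let E be a standard Borel space, (F, 𝓕) a measurable space, and T : E → F measurable and surjective. If K is a transition kernel on E that is reversible with respect to a probability measure π on E, then the pushforward transition kernel T_*K is reversible with respect to the pushforward measure T_*π, i.e., for all A, B ∈ 𝓕 one has ∫_A T_*K(y, B) T_*π(dy) = ∫_B T_*K(y, A) T_*π(dy). -/
open MeasureTheory ProbabilityTheory
open scoped ENNReal NNReal

/-! Disintegrating `π` along `T` gives `T_*π ⊗ condDistrib id T π = (T, id)_*π`, so the joint law of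
a step of `T_*K` is the image of the joint law `π ⊗ K` of a step of `K` under `T × T`. The swap
commutes with `T × T`, hence swap-invariance passes from `π ⊗ K` to `T_*π ⊗ T_*K`, and the two
integrals in the statement are the masses of `A × B` and `B × A` under that measure. -/

/-- The pushforward transition kernel `T_*K(y, B) := E[K(X, T⁻¹(B)) | T(X) = y]`, `X ∼ π`,
realized via a regular conditional distribution `condDistrib id T π` of `X` given `T(X)`. -/
noncomputable def pushKernel {E F : Type*} [MeasurableSpace E] [StandardBorelSpace E] [Nonempty E]
    [MeasurableSpace F] (T : E → F) (π : Measure E) [IsFiniteMeasure π] (K : Kernel E E) :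
    Kernel F F :=
  Kernel.map (K ∘ₖ condDistrib id T π) T

/-- A transition kernel `K` is reversible w.r.t. `π` if the measure `ν_K(dx dx') := K(x, dx') π(dx)`
on `E × E` is invariant under the coordinate swap `(x, x') ↦ (x', x)`. -/
def IsReversible {E : Type*} [MeasurableSpace E] (π : Measure E) (K : Kernel E E) : Prop :=
  (π ⊗ₘ K).map Prod.swap = π ⊗ₘ K

section PushKernel

variable {E F : Type*} [MeasurableSpace E] [MeasurableSpace F]

lemma IsReversible.compProd_apply_prod_comm {π : Measure E} {K : Kernel E E}
    (hrev : IsReversible π K) {A B : Set E} (hA : MeasurableSet A) (hB : MeasurableSet B) :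
    (π ⊗ₘ K) (A ×ˢ B) = (π ⊗ₘ K) (B ×ˢ A) := by
  rw [← hrev, Measure.map_apply measurable_swap (hB.prod hA), Set.preimage_swap_prod, hrev]

lemma parallelComp_comp_map_prodMap {G H E' : Type*} [MeasurableSpace G] [MeasurableSpace H]
    [MeasurableSpace E'] {T : E → E'} (hT : Measurable T) (μ : Measure (E × G))
    (K : Kernel G H) [IsSFiniteKernel K] :
    (Kernel.id ∥ₖ K) ∘ₘ μ.map (Prod.map T id) = ((Kernel.id ∥ₖ K) ∘ₘ μ).map (Prod.map T id) := by
  have hTid : Measurable (Prod.map T (id : G → G)) := hT.prodMap measurable_id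
  have hTid' : Measurable (Prod.map T (id : H → H)) := hT.prodMap measurable_id
  have hcomm : (Kernel.id ∥ₖ K) ∘ₖ Kernel.deterministic _ hTid
      = Kernel.deterministic _ hTid' ∘ₖ (Kernel.id ∥ₖ K) := by
    rw [← Kernel.deterministic_parallelComp_deterministic hT measurable_id,
      ← Kernel.deterministic_parallelComp_deterministic hT measurable_id, ← Kernel.id, ← Kernel.id,
      Kernel.parallelComp_comp_parallelComp, Kernel.parallelComp_comp_parallelComp,
      Kernel.id_comp, Kernel.comp_id, Kernel.id_comp, Kernel.comp_id]
  rw [← Measure.deterministic_comp_eq_map hTid, ← Measure.deterministic_comp_eq_map hTid',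
    Measure.comp_assoc, hcomm, Measure.comp_assoc]

variable [StandardBorelSpace E] [Nonempty E]

instance isSFiniteKernel_pushKernel (T : E → F) (π : Measure E) [IsFiniteMeasure π]
    (K : Kernel E E) [IsSFiniteKernel K] :
    IsSFiniteKernel (pushKernel T π K) := by
  unfold pushKernel
  infer_instance

lemma compProd_comp_condDistrib {T : E → F} (hT : Measurable T) (π : Measure E)
    [IsFiniteMeasure π] (K : Kernel E E) [IsSFiniteKernel K] :
    π.map T ⊗ₘ (K ∘ₖ condDistrib id T π) = (π ⊗ₘ K).map (Prod.map T id) := by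
  have hgraph : π.map (fun x ↦ (T x, id x)) = (π ⊗ₘ Kernel.id).map (Prod.map T id) := by
    rw [Measure.compProd_id, Measure.map_map (hT.prodMap measurable_id) measurable_diag]
    rfl
  rw [← Measure.parallelComp_comp_compProd, compProd_map_condDistrib aemeasurable_id, hgraph,
    parallelComp_comp_map_prodMap hT, Measure.parallelComp_comp_compProd, Kernel.comp_id]

lemma compProd_pushKernel {T : E → F} (hT : Measurable T) (π : Measure E)
    [IsFiniteMeasure π] (K : Kernel E E) [IsSFiniteKernel K] :
    π.map T ⊗ₘ pushKernel T π K = (π ⊗ₘ K).map (Prod.map T T) := by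
  rw [pushKernel, Measure.compProd_map hT, compProd_comp_condDistrib hT,
    Measure.map_map (measurable_id.prodMap hT) (hT.prodMap measurable_id)]
  rfl

lemma IsReversible.pushKernel {T : E → F} (hT : Measurable T) {π : Measure E}
    [IsFiniteMeasure π] {K : Kernel E E} [IsSFiniteKernel K] (hrev : IsReversible π K) :
    IsReversible (π.map T) (pushKernel T π K) := by
  have hTT : Measurable (Prod.map T T) := hT.prodMap hT
  rw [IsReversible, compProd_pushKernel hT, Measure.map_map measurable_swap hTT,
    ← Prod.map_comp_swap, ← Measure.map_map hTT measurable_swap, hrev]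

end PushKernel

theorem pushKernel_reversible_general
    {E F : Type*} [MeasurableSpace E] [StandardBorelSpace E] [Nonempty E] [MeasurableSpace F]
    (T : E → F) (hT : Measurable T)
    (π : Measure E) [IsProbabilityMeasure π] (K : Kernel E E) [IsMarkovKernel K]
    (hrev : IsReversible π K) :
    ∀ A B : Set F, MeasurableSet A → MeasurableSet B →
      ∫⁻ y in A, pushKernel T π K y B ∂(π.map T)
        = ∫⁻ y in B, pushKernel T π K y A ∂(π.map T) := by
  intro A B hA hB
  rw [← Measure.compProd_apply_prod hA hB, ← Measure.compProd_apply_prod hB hA]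
  exact (hrev.pushKernel hT).compProd_apply_prod_comm hA hB

/-- If `K` is reversible w.r.t. the probability measure `π` on the standard Borel
space `E`, and `T : E → F` is measurable and surjective, then the pushforward kernel `T_*K` is
reversible w.r.t. `T_*π`: for all measurable `A, B ⊆ F`,
`∫_A T_*K(y, B) T_*π(dy) = ∫_B T_*K(y, A) T_*π(dy)`. -/
theorem pushKernel_reversible
    {E F : Type*} [MeasurableSpace E] [StandardBorelSpace E] [Nonempty E] [MeasurableSpace F]
    (T : E → F) (hT : Measurable T) (hTsurj : Function.Surjective T)
    (π : Measure E) [IsProbabilityMeasure π] (K : Kernel E E) [IsMarkovKernel K]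
    (hrev : IsReversible π K) :
    ∀ A B : Set F, MeasurableSet A → MeasurableSet B →
      ∫⁻ y in A, pushKernel T π K y B ∂(π.map T)
        = ∫⁻ y in B, pushKernel T π K y A ∂(π.map T) :=
  pushKernel_reversible_general T hT π K hrev
end

section
/- Let E be a standard Borel space, (F, 𝓕) a measurable space, T : E → F measurable and surjective, and K a transition kernel on E reversible with respect to a probability measure π on E. Then the spectral gaps satisfy gap(T_*π, T_*K) ≥ gap(π, K). If moreover T is bijective (with measurable inverse), then gap(T_*π, T_*K) = gap(π, K). -/
open MeasureTheory ProbabilityTheory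
open scoped ENNReal NNReal

/-- The spectral gap `gap(π, K) := 1 − sup_{0 ≠ f ∈ L²_π} ‖K f − π(f)‖_{L²_π} / ‖f‖_{L²_π}` of a
`π`-reversible transition kernel `K` with Markov operator `K f(x) = ∫ f(y) K(x, dy)`. -/
noncomputable def spectralGap {E : Type*} [MeasurableSpace E] (π : Measure E) (K : Kernel E E) :
    ℝ :=
  1 - sSup {r : ℝ | ∃ f : E → ℝ, MemLp f 2 π ∧ eLpNorm f 2 π ≠ 0 ∧
    r = (eLpNorm (fun x => (∫ y, f y ∂(K x)) - ∫ y, f y ∂π) 2 π).toReal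
          / (eLpNorm f 2 π).toReal}

/-!
Pulling back along `T` embeds `L²(T_*π)` isometrically into `L²(π)` as the `σ(T)`-measurable
functions, and under this embedding the Markov operator of `T_*K` becomes `f ↦ 𝔼_π[K f | σ(T)]`.
Conditional expectation is an `L²` contraction, so every ratio
`‖T_*K g - T_*π(g)‖ / ‖g‖` is dominated by the ratio of `g ∘ T` for `K`, and the supremum in the
spectral gap can only decrease. For a measurable bijection `σ(T)` is the whole σ-algebra, the
conditional expectation is the identity, and the ratios coincide.
-/

section MarkovOperator

variable {α : Type*} [MeasurableSpace α] {μ : Measure α} {κ : Kernel α α}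

theorem IsReversible.invariant [SFinite μ] [IsMarkovKernel κ] (h : IsReversible μ κ) :
    κ.Invariant μ := by
  rw [Kernel.Invariant, ← Measure.snd_compProd, ← h, Measure.snd,
    Measure.map_map measurable_snd measurable_swap]
  exact Measure.fst_compProd μ κ

/-- The measures `κ x` need not be absolutely continuous w.r.t. `μ`; invariance makes `μ`-null
sets `κ x`-null for `μ`-a.e. `x`. -/
theorem ProbabilityTheory.Kernel.Invariant.ae_integral_congr {G : Type*} [NormedAddCommGroup G]
    [NormedSpace ℝ G] (h : κ.Invariant μ) {f f' : α → G} (hff' : f =ᵐ[μ] f') :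
    ∀ᵐ x ∂μ, ∫ y, f y ∂κ x = ∫ y, f' y ∂κ x := by
  rw [← h.def] at hff'
  filter_upwards [Measure.ae_ae_of_ae_comp hff'] with x hx using integral_congr_ae hx

theorem eLpNorm_two_rpow_two {ε : Type*} [ENorm ε] {ν : Measure α} (f : α → ε) :
    eLpNorm f 2 ν ^ (2 : ℝ) = ∫⁻ y, ‖f y‖ₑ ^ (2 : ℝ) ∂ν :=
  eLpNorm_nnreal_pow_eq_lintegral (p := 2) two_ne_zero

section Integral

variable {G : Type*} [NormedAddCommGroup G] [NormedSpace ℝ G] (ν : Measure α)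
  [IsProbabilityMeasure ν] {f : α → G}

theorem enorm_integral_le_eLpNorm_two (hf : AEStronglyMeasurable f ν) :
    ‖∫ y, f y ∂ν‖ₑ ≤ eLpNorm f 2 ν :=
  calc ‖∫ y, f y ∂ν‖ₑ ≤ eLpNorm f 1 ν :=
        eLpNorm_one_eq_lintegral_enorm (f := f) ▸ enorm_integral_le_lintegral_enorm f
    _ ≤ eLpNorm f 2 ν := eLpNorm_le_eLpNorm_of_exponent_le one_le_two hf

theorem enorm_integral_rpow_two_le (hf : AEStronglyMeasurable f ν) :
    ‖∫ y, f y ∂ν‖ₑ ^ (2 : ℝ) ≤ ∫⁻ y, ‖f y‖ₑ ^ (2 : ℝ) ∂ν :=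
  calc ‖∫ y, f y ∂ν‖ₑ ^ (2 : ℝ) ≤ eLpNorm f 2 ν ^ (2 : ℝ) := by
        gcongr; exact enorm_integral_le_eLpNorm_two ν hf
    _ = ∫⁻ y, ‖f y‖ₑ ^ (2 : ℝ) ∂ν := eLpNorm_two_rpow_two f

end Integral

theorem ProbabilityTheory.Kernel.Invariant.eLpNorm_integral_le [IsMarkovKernel κ]
    (h : κ.Invariant μ) {f : α → ℝ} (hf : Measurable f) :
    eLpNorm (fun x => ∫ y, f y ∂κ x) 2 μ ≤ eLpNorm f 2 μ := by
  rw [← ENNReal.rpow_le_rpow_iff (z := (2 : ℝ)) two_pos, eLpNorm_two_rpow_two,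
    eLpNorm_two_rpow_two]
  calc ∫⁻ x, ‖∫ y, f y ∂κ x‖ₑ ^ (2 : ℝ) ∂μ ≤ ∫⁻ x, ∫⁻ y, ‖f y‖ₑ ^ (2 : ℝ) ∂κ x ∂μ :=
        lintegral_mono fun x => enorm_integral_rpow_two_le (κ x) hf.aestronglyMeasurable
    _ = ∫⁻ y, ‖f y‖ₑ ^ (2 : ℝ) ∂μ := by
      rw [← Measure.lintegral_bind κ.aemeasurable (by fun_prop), h.def]

theorem ProbabilityTheory.Kernel.Invariant.memLp_integral [IsMarkovKernel κ]
    (h : κ.Invariant μ) {f : α → ℝ} (hf : Measurable f) (hf2 : MemLp f 2 μ) :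
    MemLp (fun x => ∫ y, f y ∂κ x) 2 μ :=
  ⟨hf.stronglyMeasurable.integral_kernel.aestronglyMeasurable,
    (h.eLpNorm_integral_le hf).trans_lt hf2.eLpNorm_lt_top⟩

end MarkovOperator

section GapRatio

variable {α : Type*} [MeasurableSpace α]

noncomputable def gapRatio (μ : Measure α) (κ : Kernel α α) (f : α → ℝ) : ℝ :=
  (eLpNorm (fun x => (∫ y, f y ∂κ x) - ∫ y, f y ∂μ) 2 μ).toReal / (eLpNorm f 2 μ).toReal

def gapSet (μ : Measure α) (κ : Kernel α α) : Set ℝ :=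
  {r | ∃ f : α → ℝ, MemLp f 2 μ ∧ eLpNorm f 2 μ ≠ 0 ∧ r = gapRatio μ κ f}

variable {μ : Measure α} {κ : Kernel α α}

theorem spectralGap_eq_one_sub_sSup_gapSet : spectralGap μ κ = 1 - sSup (gapSet μ κ) :=
  rfl

theorem ProbabilityTheory.Kernel.Invariant.gapRatio_congr (h : κ.Invariant μ)
    {f f' : α → ℝ} (hff' : f =ᵐ[μ] f') : gapRatio μ κ f = gapRatio μ κ f' := by
  have hnum : (fun x => (∫ y, f y ∂κ x) - ∫ y, f y ∂μ) =ᵐ[μ]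
      fun x => (∫ y, f' y ∂κ x) - ∫ y, f' y ∂μ := by
    filter_upwards [h.ae_integral_congr hff'] with x hx
    rw [hx, integral_congr_ae hff']
  rw [gapRatio, gapRatio, eLpNorm_congr_ae hnum, eLpNorm_congr_ae hff']

theorem ProbabilityTheory.Kernel.Invariant.exists_measurable_of_mem_gapSet
    (h : κ.Invariant μ) {r : ℝ} (hr : r ∈ gapSet μ κ) :
    ∃ f : α → ℝ, Measurable f ∧ MemLp f 2 μ ∧ eLpNorm f 2 μ ≠ 0 ∧ r = gapRatio μ κ f := by
  obtain ⟨f, hf2, hf0, rfl⟩ := hr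
  have hff' := hf2.1.ae_eq_mk
  exact ⟨hf2.1.mk f, hf2.1.stronglyMeasurable_mk.measurable, hf2.ae_eq hff',
    eLpNorm_congr_ae hff' ▸ hf0, h.gapRatio_congr hff'⟩

variable [IsProbabilityMeasure μ] [IsMarkovKernel κ]

theorem gapRatio_le_two (h : κ.Invariant μ) {f : α → ℝ} (hf : Measurable f)
    (hf2 : MemLp f 2 μ) : gapRatio μ κ f ≤ 2 := by
  have hnum : eLpNorm (fun x => (∫ y, f y ∂κ x) - ∫ y, f y ∂μ) 2 μ ≤ 2 * eLpNorm f 2 μ :=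
    calc _ ≤ eLpNorm (fun x => ∫ y, f y ∂κ x) 2 μ + eLpNorm (fun _ => ∫ y, f y ∂μ) 2 μ :=
          eLpNorm_sub_le (h.memLp_integral hf hf2).1 aestronglyMeasurable_const one_le_two
      _ ≤ eLpNorm f 2 μ + eLpNorm f 2 μ := by
          gcongr
          · exact h.eLpNorm_integral_le hf
          · simpa [eLpNorm_const _ two_ne_zero (IsProbabilityMeasure.ne_zero μ)] using
              enorm_integral_le_eLpNorm_two μ hf2.1
      _ = 2 * eLpNorm f 2 μ := (two_mul _).symm
  refine div_le_of_le_mul₀ ENNReal.toReal_nonneg zero_le_two ?_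
  calc _ ≤ (2 * eLpNorm f 2 μ).toReal :=
        ENNReal.toReal_mono (ENNReal.mul_ne_top ENNReal.ofNat_ne_top hf2.eLpNorm_ne_top) hnum
    _ = 2 * (eLpNorm f 2 μ).toReal := by simp [ENNReal.toReal_mul]

theorem zero_mem_gapSet : (0 : ℝ) ∈ gapSet μ κ :=
  ⟨fun _ => 1, memLp_const 1,
    by simp [eLpNorm_const _ two_ne_zero (IsProbabilityMeasure.ne_zero μ)], by simp [gapRatio]⟩

theorem bddAbove_gapSet (h : κ.Invariant μ) : BddAbove (gapSet μ κ) := by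
  refine ⟨2, fun r hr => ?_⟩
  obtain ⟨f, hf, hf2, -, rfl⟩ := h.exists_measurable_of_mem_gapSet hr
  exact gapRatio_le_two h hf hf2

end GapRatio

theorem spectralGap_le_of_forall_gapRatio_le {α β : Type*} [MeasurableSpace α]
    [MeasurableSpace β] {μ : Measure α} [IsProbabilityMeasure μ] {κ : Kernel α α}
    [IsMarkovKernel κ] {ν : Measure β} [IsProbabilityMeasure ν] {η : Kernel β β}
    [IsMarkovKernel η] (hκ : κ.Invariant μ) (hη : η.Invariant ν)
    (H : ∀ f : α → ℝ, Measurable f → MemLp f 2 μ → eLpNorm f 2 μ ≠ 0 →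
      ∃ g : β → ℝ, MemLp g 2 ν ∧ eLpNorm g 2 ν ≠ 0 ∧ gapRatio μ κ f ≤ gapRatio ν η g) :
    spectralGap ν η ≤ spectralGap μ κ := by
  rw [spectralGap_eq_one_sub_sSup_gapSet, spectralGap_eq_one_sub_sSup_gapSet]
  refine sub_le_sub_left (csSup_le ⟨0, zero_mem_gapSet⟩ fun r hr => ?_) 1
  obtain ⟨f, hf, hf2, hf0, rfl⟩ := hκ.exists_measurable_of_mem_gapSet hr
  obtain ⟨g, hg2, hg0, hle⟩ := H f hf hf2 hf0
  exact le_csSup_of_le (bddAbove_gapSet hη) ⟨g, hg2, hg0, rfl⟩ hle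

section Pushforward

variable {E F : Type*} [MeasurableSpace E] [StandardBorelSpace E] [Nonempty E]
  [MeasurableSpace F] {T : E → F} {π : Measure E} [IsFiniteMeasure π] {K : Kernel E E}

theorem isMarkovKernel_pushKernel [IsMarkovKernel K] (hT : Measurable T) :
    IsMarkovKernel (pushKernel T π K) :=
  Kernel.IsMarkovKernel.map _ hT

theorem ProbabilityTheory.Kernel.Invariant.pushKernel (hK : K.Invariant π) (hT : Measurable T) :
    (pushKernel T π K).Invariant (π.map T) := by
  rw [Kernel.Invariant, _root_.pushKernel, ← Measure.map_comp _ _ hT, ← Measure.comp_assoc,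
    condDistrib_comp_map hT.aemeasurable aemeasurable_id, Measure.map_id, hK.def]

variable [IsMarkovKernel K]

theorem pushKernel_integral_comp_ae_eq_condExp (hK : K.Invariant π) (hT : Measurable T)
    {g : F → ℝ} (hg : Measurable g) (hg2 : MemLp g 2 (π.map T)) :
    (fun x => ∫ z, g z ∂pushKernel T π K (T x))
      =ᵐ[π] π[fun x => ∫ y, g (T y) ∂K x | MeasurableSpace.comap T inferInstance] := by
  have hgT2 : MemLp (g ∘ T) 2 π := (memLp_map_measure_iff hg2.1 hT.aemeasurable).mp hg2
  have hgT_int : Integrable (g ∘ T) ((K ∘ₖ condDistrib id T π) ∘ₘ π.map T) := by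
    rw [← Measure.comp_assoc, condDistrib_comp_map hT.aemeasurable aemeasurable_id,
      Measure.map_id, hK.def]
    exact hgT2.integrable one_le_two
  have hpush : ∀ᵐ y ∂π.map T,
      ∫ z, g z ∂pushKernel T π K y = ∫ u, ∫ y, g (T y) ∂K u ∂condDistrib id T π y := by
    filter_upwards [Measure.ae_integrable_of_integrable_comp hgT_int] with y hy
    rw [_root_.pushKernel, Kernel.map_apply _ hT,
      integral_map hT.aemeasurable hg.aestronglyMeasurable]
    exact Kernel.integral_comp hy
  filter_upwards [ae_of_ae_map hT.aemeasurable hpush,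
    condExp_ae_eq_integral_condDistrib_id hT
      ((hK.memLp_integral (hg.comp hT) hgT2).integrable one_le_two)] with x hx hcond
  exact hx.trans hcond.symm

theorem gapRatio_pushKernel_eq (hK : K.Invariant π) (hT : Measurable T) {g : F → ℝ}
    (hg : Measurable g) (hg2 : MemLp g 2 (π.map T)) :
    gapRatio (π.map T) (pushKernel T π K) g =
      (eLpNorm (π[fun x => (∫ y, g (T y) ∂K x) - ∫ y, g (T y) ∂π |
        MeasurableSpace.comap T inferInstance]) 2 π).toReal / (eLpNorm (g ∘ T) 2 π).toReal := by
  have hm := hT.comap_le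
  have hgT2 : MemLp (g ∘ T) 2 π := (memLp_map_measure_iff hg2.1 hT.aemeasurable).mp hg2
  have hcond : (fun y => (∫ z, g z ∂pushKernel T π K y) - ∫ z, g z ∂π.map T) ∘ T
      =ᵐ[π] π[fun x => (∫ y, g (T y) ∂K x) - ∫ y, g (T y) ∂π |
        MeasurableSpace.comap T inferInstance] := by
    filter_upwards [pushKernel_integral_comp_ae_eq_condExp hK hT hg hg2,
      condExp_sub ((hK.memLp_integral (hg.comp hT) hgT2).integrable one_le_two)
        (integrable_const (∫ y, g (T y) ∂π)) (m := MeasurableSpace.comap T inferInstance)]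
      with x hx hsub
    rw [condExp_const hm] at hsub
    rw [Function.comp_apply, hx, integral_map hT.aemeasurable hg.aestronglyMeasurable]
    exact hsub.symm
  rw [gapRatio, eLpNorm_map_measure ?_ hT.aemeasurable, eLpNorm_congr_ae hcond,
    eLpNorm_map_measure hg.aestronglyMeasurable hT.aemeasurable]
  exact (hg.stronglyMeasurable.integral_kernel.sub stronglyMeasurable_const).aestronglyMeasurable

theorem gapRatio_pushKernel_le (hK : K.Invariant π) (hT : Measurable T) {g : F → ℝ}
    (hg : Measurable g) (hg2 : MemLp g 2 (π.map T)) :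
    gapRatio (π.map T) (pushKernel T π K) g ≤ gapRatio π K (g ∘ T) := by
  have hgT2 : MemLp (g ∘ T) 2 π := (memLp_map_measure_iff hg2.1 hT.aemeasurable).mp hg2
  have hnum2 := (hK.memLp_integral (hg.comp hT) hgT2).sub (memLp_const (∫ y, g (T y) ∂π))
  rw [gapRatio_pushKernel_eq hK hT hg hg2, gapRatio]
  exact div_le_div_of_nonneg_right
    (ENNReal.toReal_mono hnum2.eLpNorm_ne_top (eLpNorm_condExp_le_eLpNorm _ one_le_two))
    ENNReal.toReal_nonneg

theorem gapRatio_pushKernel_measurableEquiv (hK : K.Invariant π) (e : E ≃ᵐ F) {g : F → ℝ}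
    (hg : Measurable g) (hg2 : MemLp g 2 (π.map e)) :
    gapRatio (π.map e) (pushKernel e π K) g = gapRatio π K (g ∘ e) := by
  have hgT2 : MemLp (g ∘ e) 2 π := (memLp_map_measure_iff hg2.1 e.measurable.aemeasurable).mp hg2
  rw [gapRatio_pushKernel_eq hK e.measurable hg hg2, e.measurableEmbedding.comap_eq,
    condExp_of_stronglyMeasurable le_rfl _ ?_, gapRatio]
  · rfl
  · exact (hg.comp e.measurable).stronglyMeasurable.integral_kernel.sub stronglyMeasurable_const
  · exact ((hK.memLp_integral (hg.comp e.measurable) hgT2).sub (memLp_const _)).integrable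
      one_le_two

end Pushforward

theorem spectralGap_pushforward_general
    {E F : Type*} [MeasurableSpace E] [StandardBorelSpace E] [Nonempty E] [MeasurableSpace F]
    (T : E → F) (hT : Measurable T)
    (π : Measure E) [IsProbabilityMeasure π] (K : Kernel E E) [IsMarkovKernel K]
    (hrev : IsReversible π K) :
    spectralGap π K ≤ spectralGap (π.map T) (pushKernel T π K) ∧
      ∀ e : E ≃ᵐ F, (⇑e = T) →
        spectralGap (π.map T) (pushKernel T π K) = spectralGap π K := by
  have : IsProbabilityMeasure (π.map T) := Measure.isProbabilityMeasure_map hT.aemeasurable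
  have : IsMarkovKernel (pushKernel T π K) := isMarkovKernel_pushKernel hT
  have hK : K.Invariant π := hrev.invariant
  have hKT : (pushKernel T π K).Invariant (π.map T) := hK.pushKernel hT
  have hle : spectralGap π K ≤ spectralGap (π.map T) (pushKernel T π K) :=
    spectralGap_le_of_forall_gapRatio_le hKT hK fun g hg hg2 hg0 =>
      ⟨g ∘ T, (memLp_map_measure_iff hg2.1 hT.aemeasurable).mp hg2,
        eLpNorm_map_measure hg2.1 hT.aemeasurable ▸ hg0, gapRatio_pushKernel_le hK hT hg hg2⟩
  refine ⟨hle, fun e he => le_antisymm ?_ hle⟩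
  subst he
  refine spectralGap_le_of_forall_gapRatio_le hK hKT fun f hf hf2 hf0 => ?_
  have hfe : (f ∘ e.symm) ∘ e = f := by ext; simp
  have hfe2 : MemLp (f ∘ e.symm) 2 (π.map e) := by
    rwa [e.memLp_map_measure_iff, hfe]
  refine ⟨f ∘ e.symm, hfe2, ?_, ?_⟩
  · rwa [e.measurableEmbedding.eLpNorm_map_measure, hfe]
  · rw [gapRatio_pushKernel_measurableEquiv hK e (hf.comp e.symm.measurable) hfe2, hfe]

/-- For `K` reversible w.r.t. the probability measure `π` and `T : E → F`
measurable and surjective, the spectral gaps satisfy `gap(T_*π, T_*K) ≥ gap(π, K)`; if moreover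
`T` is a (bi-)measurable bijection, then `gap(T_*π, T_*K) = gap(π, K)`. -/
theorem spectralGap_pushforward
    {E F : Type*} [MeasurableSpace E] [StandardBorelSpace E] [Nonempty E] [MeasurableSpace F]
    (T : E → F) (hT : Measurable T) (hTsurj : Function.Surjective T)
    (π : Measure E) [IsProbabilityMeasure π] (K : Kernel E E) [IsMarkovKernel K]
    (hrev : IsReversible π K) :
    spectralGap π K ≤ spectralGap (π.map T) (pushKernel T π K) ∧
      ∀ e : E ≃ᵐ F, (⇑e = T) →
        spectralGap (π.map T) (pushKernel T π K) = spectralGap π K :=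
  spectralGap_pushforward_general T hT π K hrev
end

section
/- Let π_n = N(x_n, C_n) be a Gaussian measure on ℝ^d with mean x_n ∈ ℝ^d and symmetric positive definite covariance C_n ∈ ℝ^{d×d}, and let P_n(x) = N(x, s²C_n) with s > 0 be the Hessian-based Gaussian random walk proposal. Then the π_n-reversible Metropolis–Hastings transition kernel K_n with proposal P_n satisfies K_n = (T_n)_*K with T_n(x) := x_n + C_n^{1/2} x, where K is the Metropolis–Hastings transition kernel targeting the standard Gaussian π = N(0, I_d) with proposal kernel P(x) = N(x, s² I_d). -/
open MeasureTheory ProbabilityTheory Matrix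
open scoped ENNReal NNReal MatrixOrder

/-- The standard Gaussian measure `N(0, I_d)` on `ℝ^d`. -/
noncomputable def stdGaussian (d : ℕ) : Measure (Fin d → ℝ) :=
  Measure.pi fun _ => gaussianReal 0 1

instance (d : ℕ) : IsProbabilityMeasure (stdGaussian d) := by
  unfold _root_.stdGaussian; infer_instance

/-- The Gaussian measure `N(m, C)` on `ℝ^d`, realized as the pushforward of the standard
Gaussian under `x ↦ m + C^{1/2} x` for positive semidefinite `C` (junk value otherwise). -/
noncomputable def gaussian {d : ℕ} (m : Fin d → ℝ) (C : Matrix (Fin d) (Fin d) ℝ) :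
    Measure (Fin d → ℝ) :=
  letI := Classical.propDecidable C.PosSemidef
  if hC : C.PosSemidef then (_root_.stdGaussian d).map (fun x => m + CFC.sqrt C *ᵥ x)
  else Measure.dirac m

instance {d : ℕ} (m : Fin d → ℝ) (C : Matrix (Fin d) (Fin d) ℝ) :
    IsProbabilityMeasure (gaussian m C) := by
  unfold gaussian
  split
  · exact Measure.isProbabilityMeasure_map
      ((continuous_const.add ((continuous_const.matrix_mulVec continuous_id))).measurable.aemeasurable)
  · infer_instance

/-- The random-walk transition kernel: `P(x, ·)` is the law of `x + ξ` with `ξ ∼ μ`. -/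
noncomputable def rwKernel {d : ℕ} (μ : Measure (Fin d → ℝ)) :
    Kernel (Fin d → ℝ) (Fin d → ℝ) :=
  Kernel.map (Kernel.id ×ₖ Kernel.const _ μ) (fun p => p.1 + p.2)

instance {d : ℕ} (μ : Measure (Fin d → ℝ)) [IsProbabilityMeasure μ] :
    IsMarkovKernel (rwKernel μ) :=
  Kernel.IsMarkovKernel.map _ (measurable_fst.add measurable_snd)

/-- The Metropolis–Hastings acceptance probability `α_P(x, x') := min{1, dν_P^⊤/dν_P (x, x')}`,
where `ν_P(dx dx') := P(x, dx') π(dx)` and `ν_P^⊤` is its swap. -/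
noncomputable def mhAccept {E : Type*} [MeasurableSpace E] (π : Measure E) (P : Kernel E E) :
    E × E → ℝ≥0∞ :=
  fun p => min 1 (((π ⊗ₘ P).map Prod.swap).rnDeriv (π ⊗ₘ P) p)

/-- The Metropolis–Hastings transition kernel with target `π` and proposal `P`:
`K(x, dx') = α_P(x, x') P(x, dx') + r(x) δ_x(dx')`. -/
noncomputable def mhKernel {E : Type*} [MeasurableSpace E] (π : Measure E) (P : Kernel E E)
    [IsSFiniteKernel P] : Kernel E E :=
  P.withDensity (fun x y => mhAccept π P (x, y)) +
    (Kernel.id).withDensity (fun x _ => ∫⁻ y, (1 - mhAccept π P (x, y)) ∂(P x))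


/-! The Metropolis–Hastings construction commutes with measurable bijections: if `T` pushes `π`
to `π_n` and conjugates `P` to `P_n`, then `T × T` pushes `ν_P` and `ν_P^⊤` to `ν_{P_n}` and
`ν_{P_n}^⊤`, so the acceptance probabilities agree along `T` and hence so do the two kernels.
For `T_n x = x_n + C_n^{1/2} x` both hypotheses hold: `N(x_n, C_n) = (T_n)_* N(0, I)` by
construction, and `N(0, s² C_n) = (C_n^{1/2})_* N(0, s² I)` because
`(s² C_n)^{1/2} = |s| C_n^{1/2}`, which makes the two random walks conjugate. -/

open Filter

section MetropolisHastings

variable {E F : Type*} [MeasurableSpace E] [MeasurableSpace F]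

lemma measurable_mhAccept (π : Measure E) (P : Kernel E E) : Measurable (mhAccept π P) :=
  measurable_const.min (Measure.measurable_rnDeriv _ _)

lemma mhKernel_apply (π : Measure E) (P : Kernel E E) [IsSFiniteKernel P] (x : E) :
    mhKernel π P x = (P x).withDensity (fun y => mhAccept π P (x, y)) +
      (∫⁻ y, (1 - mhAccept π P (x, y)) ∂(P x)) • Measure.dirac x := by
  have hα := measurable_mhAccept π P
  have hr : Measurable
      (Function.uncurry fun x (_ : E) => ∫⁻ y, (1 - mhAccept π P (x, y)) ∂(P x)) :=
    (measurable_const.sub hα).lintegral_kernel_prod_right'.comp measurable_fst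
  rw [mhKernel, _root_.add_apply,
    Kernel.withDensity_apply (f := fun x y => mhAccept π P (x, y)) _ hα,
    Kernel.withDensity_apply _ hr, Kernel.id_apply, withDensity_const]

lemma map_withDensity_comp {μ : Measure E} {f : E → F} (hf : Measurable f) {g : F → ℝ≥0∞}
    (hg : Measurable g) : (μ.withDensity (g ∘ f)).map f = (μ.map f).withDensity g := by
  ext s hs
  rw [withDensity_apply _ hs, Measure.map_apply hf hs, withDensity_apply _ (hf hs),
    setLIntegral_map hs hg hf]
  rfl

lemma map_compProd_prodMap {π : Measure E} [SFinite π] {P : Kernel E E} {Q : Kernel F F}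
    [IsSFiniteKernel P] [IsSFiniteKernel Q] {f : E → F} (hf : Measurable f)
    (hQ : ∀ x, Q (f x) = (P x).map f) :
    (π ⊗ₘ P).map (Prod.map f f) = π.map f ⊗ₘ Q := by
  ext s hs
  rw [Measure.compProd_apply hs, Measure.map_apply (hf.prodMap hf) hs,
    Measure.compProd_apply ((hf.prodMap hf) hs),
    lintegral_map (Kernel.measurable_kernel_prodMk_left hs) hf]
  refine lintegral_congr fun x => ?_
  rw [hQ x, Measure.map_apply hf (measurable_prodMk_left hs)]
  rfl

variable {π : Measure E} [IsFiniteMeasure π] {P : Kernel E E} [IsFiniteKernel P]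
  {Q : Kernel F F} [IsSFiniteKernel Q] (e : E ≃ᵐ F) (hQ : ∀ x, Q (e x) = (P x).map e)
include hQ

lemma mhAccept_map_measurableEquiv :
    ∀ᵐ p ∂(π ⊗ₘ P), mhAccept (π.map e) Q (Prod.map e e p) = mhAccept π P p := by
  have hν := map_compProd_prodMap (π := π) e.measurable hQ
  have hνswap : (π.map e ⊗ₘ Q).map Prod.swap
      = ((π ⊗ₘ P).map Prod.swap).map (Prod.map e e) := by
    rw [← hν, Measure.map_map measurable_swap (e.measurable.prodMap e.measurable),
      Measure.map_map (e.measurable.prodMap e.measurable) measurable_swap]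
    rfl
  filter_upwards [(e.prodCongr e).measurableEmbedding.rnDeriv_map
    ((π ⊗ₘ P).map Prod.swap) (π ⊗ₘ P)] with p hp
  rw [mhAccept, mhAccept, hνswap, ← hν]
  exact congrArg (min 1) hp

lemma mhKernel_map_measurableEquiv :
    ∀ᵐ x ∂π, mhKernel (π.map e) Q (e x) = (mhKernel π P x).map e := by
  filter_upwards [Measure.ae_ae_of_ae_compProd (mhAccept_map_measurableEquiv e hQ)] with x hx
  have hα : Measurable fun y => mhAccept (π.map e) Q (e x, y) :=
    (measurable_mhAccept _ _).comp measurable_prodMk_left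
  have hr : Measurable fun y => 1 - mhAccept (π.map e) Q (e x, y) := hα.const_sub 1
  rw [mhKernel_apply, mhKernel_apply, Measure.map_add _ _ e.measurable, Measure.map_smul,
    Measure.map_dirac' e.measurable, hQ, lintegral_map hr e.measurable,
    ← map_withDensity_comp e.measurable hα]
  congr 2
  · exact withDensity_congr_ae hx
  · exact lintegral_congr_ae (hx.mono fun y hy => congrArg (1 - ·) hy)

end MetropolisHastings

section Affine

variable {d : ℕ}

lemma Matrix.PosSemidef.sqrt_sq_smul {n : Type*} [Fintype n] [DecidableEq n]
    {A : Matrix n n ℝ} (hA : A.PosSemidef) (s : ℝ) :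
    CFC.sqrt (s ^ 2 • A) = |s| • CFC.sqrt A := by
  rw [← sq_abs, CFC.sqrt_eq_iff _ _ (hA.smul (sq_nonneg _)).nonneg
    ((CFC.sqrt_nonneg A).posSemidef.smul (abs_nonneg s)).nonneg,
    smul_mul_smul_comm, ← pow_two, CFC.sqrt_mul_sqrt_self A hA.nonneg]

lemma Matrix.PosDef.isUnit_det_sqrt {n : Type*} [Fintype n] [DecidableEq n]
    {A : Matrix n n ℝ} (hA : A.PosDef) : IsUnit (CFC.sqrt A).det := by
  rw [← isUnit_iff_isUnit_det, CFC.isUnit_sqrt_iff _ hA.posSemidef.nonneg]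
  exact hA.isUnit

lemma gaussian_zero_one : gaussian (0 : Fin d → ℝ) 1 = stdGaussian d := by
  simp [gaussian, PosSemidef.one, CFC.sqrt_one]

lemma gaussian_eq_map_gaussian_zero_one {m : Fin d → ℝ} {C : Matrix (Fin d) (Fin d) ℝ}
    (hC : C.PosSemidef) :
    gaussian m C = (gaussian 0 1).map (fun x => m + CFC.sqrt C *ᵥ x) := by
  rw [gaussian_zero_one, gaussian, dif_pos hC]

lemma gaussian_zero_sq_smul {C : Matrix (Fin d) (Fin d) ℝ} (hC : C.PosSemidef) (s : ℝ) :
    gaussian 0 (s ^ 2 • C) = (gaussian 0 (s ^ 2 • (1 : Matrix (Fin d) (Fin d) ℝ))).map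
      (CFC.sqrt C *ᵥ ·) := by
  rw [gaussian_eq_map_gaussian_zero_one (hC.smul (sq_nonneg s)),
    gaussian_eq_map_gaussian_zero_one (PosSemidef.one.smul (sq_nonneg s)),
    Measure.map_map (by fun_prop) (by fun_prop), hC.sqrt_sq_smul, PosSemidef.one.sqrt_sq_smul,
    CFC.sqrt_one]
  congr 1
  ext x
  simp [smul_mulVec, mulVec_smul]

lemma rwKernel_apply (μ : Measure (Fin d → ℝ)) [SFinite μ] (x : Fin d → ℝ) :
    rwKernel μ x = μ.map (x + ·) := by
  rw [rwKernel, Kernel.map_apply _ (by fun_prop), Kernel.prod_apply, Kernel.id_apply,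
    Kernel.const_apply, Measure.dirac_prod, Measure.map_map (by fun_prop) (by fun_prop)]
  rfl

lemma rwKernel_map_mulVec_apply (μ : Measure (Fin d → ℝ)) [SFinite μ]
    (A : Matrix (Fin d) (Fin d) ℝ) (m x : Fin d → ℝ) :
    rwKernel (μ.map (A *ᵥ ·)) (m + A *ᵥ x) = (rwKernel μ x).map (m + A *ᵥ ·) := by
  rw [rwKernel_apply, rwKernel_apply, Measure.map_map (by fun_prop) (by fun_prop),
    Measure.map_map (by fun_prop) (by fun_prop)]
  congr 1
  ext v
  simp [mulVec_add, add_assoc]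

noncomputable def affineMeasurableEquiv (m : Fin d → ℝ) (A : Matrix (Fin d) (Fin d) ℝ)
    (hA : IsUnit A.det) : (Fin d → ℝ) ≃ᵐ (Fin d → ℝ) where
  toFun x := m + A *ᵥ x
  invFun y := A⁻¹ *ᵥ (y - m)
  left_inv x := by simp [mulVec_mulVec, nonsing_inv_mul A hA]
  right_inv y := by simp [mulVec_mulVec, mul_nonsing_inv A hA]
  measurable_toFun := by exact (by fun_prop : Measurable fun x => m + A *ᵥ x)
  measurable_invFun := by exact (by fun_prop : Measurable fun y => A⁻¹ *ᵥ (y - m))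

end Affine

theorem mhKernel_gaussian_rw_pushforward_general
    {d : ℕ} (xn : Fin d → ℝ) (C : Matrix (Fin d) (Fin d) ℝ) (hC : C.PosDef)
    (s : ℝ) :
    ∀ᵐ y ∂(gaussian xn C),
      mhKernel (gaussian xn C) (rwKernel (gaussian 0 (s ^ 2 • C))) y
        = (mhKernel (gaussian 0 1)
              (rwKernel (gaussian 0 (s ^ 2 • (1 : Matrix (Fin d) (Fin d) ℝ))))
            ((CFC.sqrt C)⁻¹ *ᵥ (y - xn))).map
            (fun x => xn + CFC.sqrt C *ᵥ x) := by
  let T := affineMeasurableEquiv xn (CFC.sqrt C) hC.isUnit_det_sqrt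
  have hπ : gaussian xn C = (gaussian 0 1).map T :=
    gaussian_eq_map_gaussian_zero_one hC.posSemidef
  have hP : ∀ x, rwKernel (gaussian 0 (s ^ 2 • C)) (T x)
      = (rwKernel (gaussian 0 (s ^ 2 • (1 : Matrix (Fin d) (Fin d) ℝ))) x).map T := fun x => by
    rw [gaussian_zero_sq_smul hC.posSemidef]
    exact rwKernel_map_mulVec_apply _ _ _ _
  rw [hπ, ← MeasurableEquiv.map_ae, eventually_map]
  filter_upwards [mhKernel_map_measurableEquiv T hP] with x hx
  rwa [show (CFC.sqrt C)⁻¹ *ᵥ (T x - xn) = x from T.symm_apply_apply x]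

/-- For the Gaussian target `π_n = N(x_n, C_n)` and the Hessian-based Gaussian
random walk proposal `P_n(x) = N(x, s²C_n)`, the `π_n`-reversible MH kernel `K_n` is the
pushforward `(T_n)_*K` of the MH kernel `K` targeting `N(0, I_d)` with proposal `N(x, s²I_d)`
under the bijection `T_n(x) = x_n + C_n^{1/2} x`, i.e. (a.e.) `K_n(y, ·) = K(T_n⁻¹ y, T_n⁻¹ ·)`. -/
theorem mhKernel_gaussian_rw_pushforward
    {d : ℕ} (xn : Fin d → ℝ) (C : Matrix (Fin d) (Fin d) ℝ) (hC : C.PosDef)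
    (s : ℝ) (hs : 0 < s) :
    ∀ᵐ y ∂(gaussian xn C),
      mhKernel (gaussian xn C) (rwKernel (gaussian 0 (s ^ 2 • C))) y
        = (mhKernel (gaussian 0 1)
              (rwKernel (gaussian 0 (s ^ 2 • (1 : Matrix (Fin d) (Fin d) ℝ))))
            ((CFC.sqrt C)⁻¹ *ᵥ (y - xn))).map
            (fun x => xn + CFC.sqrt C *ᵥ x) :=
  mhKernel_gaussian_rw_pushforward_general xn C hC s
end
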